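/- Under complete, transitive, separable preferences with all objects desirable for both agents, if there exists an envy-free split (S, −S) with S ≻_1 −S (agent 1 strictly prefers its share), then MB_1 ≠ MB_2. -/
import Mathlib


variable {α : Type*}

def strictPref (pref : Finset α → Finset α → Prop) (S T : Finset α) : Prop :=
  pref S T ∧ ¬ pref T S

def Separable [Fintype α] [DecidableEq α] (pref : Finset α → Finset α → Prop) : Prop :=
  ∀ (S : Finset α), ∀ x ∉ S, (strictPref pref {x} ∅ ↔ strictPref pref (insert x S) S)

def MinimalBundle [Fintype α] [DecidableEq α] (pref : Finset α → Finset α → Prop)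
    (S : Finset α) : Prop :=
  pref S Sᶜ ∧ ∀ T ⊂ S, strictPref pref Tᶜ T

lemma pref_union_of_disjoint [Fintype α] [DecidableEq α]
    (pref : Finset α → Finset α → Prop)
    (htotal : ∀ S T : Finset α, pref S T ∨ pref T S)
    (htrans : ∀ S T U : Finset α, pref S T → pref T U → pref S U)
    (hsep : Separable pref)
    (hdes : ∀ x : α, strictPref pref {x} ∅) :
    ∀ s T : Finset α, Disjoint s T → pref (s ∪ T) T := by
  intro s
  induction s using Finset.induction_on with
  | empty =>
      intro T _
      simpa using (htotal T T).elim id id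
  | @insert x s hx ih =>
      intro T hd
      have hxT : x ∉ s ∪ T := by
        simp only [Finset.mem_union, not_or]
        exact ⟨hx, fun h => (Finset.disjoint_left.mp hd (Finset.mem_insert_self x s)) h⟩
      have hstep := (hsep (s ∪ T) x hxT).mp (hdes x)
      have hd' : Disjoint s T :=
        Finset.disjoint_of_subset_left (Finset.subset_insert x s) hd
      have h1 : pref (s ∪ T) T := ih T hd'
      have : insert x s ∪ T = insert x (s ∪ T) := by
        ext y; simp [Finset.mem_insert, Finset.mem_union, or_assoc]
      rw [this]
      exact htrans _ _ _ hstep.1 h1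

lemma pref_mono [Fintype α] [DecidableEq α]
    (pref : Finset α → Finset α → Prop)
    (htotal : ∀ S T : Finset α, pref S T ∨ pref T S)
    (htrans : ∀ S T U : Finset α, pref S T → pref T U → pref S U)
    (hsep : Separable pref)
    (hdes : ∀ x : α, strictPref pref {x} ∅) :
    ∀ T U : Finset α, T ⊆ U → pref U T := by
  intro T U hTU
  have : (U \ T) ∪ T = U := Finset.sdiff_union_of_subset hTU
  have hd : Disjoint (U \ T) T := Finset.sdiff_disjoint
  have := pref_union_of_disjoint pref htotal htrans hsep hdes (U \ T) T hd
  rwa [Finset.sdiff_union_of_subset hTU] at this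

theorem MB_ne_of_strict_envy_free [Fintype α] [DecidableEq α]
    (pref1 pref2 : Finset α → Finset α → Prop)
    (htotal1 : ∀ S T : Finset α, pref1 S T ∨ pref1 T S)
    (htrans1 : ∀ S T U : Finset α, pref1 S T → pref1 T U → pref1 S U)
    (hsep1 : Separable pref1)
    (hdes1 : ∀ x : α, strictPref pref1 {x} ∅)
    (htotal2 : ∀ S T : Finset α, pref2 S T ∨ pref2 T S)
    (htrans2 : ∀ S T U : Finset α, pref2 S T → pref2 T U → pref2 S U)
    (hsep2 : Separable pref2)
    (hdes2 : ∀ x : α, strictPref pref2 {x} ∅)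
    (S : Finset α) (hef : pref1 S Sᶜ ∧ pref2 Sᶜ S)
    (hstrict : strictPref pref1 S Sᶜ) :
    {T : Finset α | MinimalBundle pref1 T} ≠ {T : Finset α | MinimalBundle pref2 T} := by
  intro heq
  -- find a minimal (by card) subset U of Sᶜ with pref2 U Uᶜ
  set P : Set (Finset α) := {T | T ⊆ Sᶜ ∧ pref2 T Tᶜ} with hP
  have hPne : (Sᶜ : Finset α) ∈ P := by
    refine ⟨le_refl _, ?_⟩
    rw [compl_compl]
    exact hef.2
  obtain ⟨U, hU, hmin⟩ :=
    (InvImage.wf (Finset.card : Finset α → ℕ) Nat.lt_wfRel.wf).has_min P ⟨_, hPne⟩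
  -- U is a minimal bundle of agent 2
  have hMB2 : MinimalBundle pref2 U := by
    refine ⟨hU.2, ?_⟩
    intro T hT
    have hnot : ¬ pref2 T Tᶜ := by
      intro h
      exact hmin T ⟨hT.subset.trans hU.1, h⟩ (Finset.card_lt_card hT)
    have := (htotal2 T Tᶜ).resolve_left hnot
    exact ⟨this, hnot⟩
  have hMB1 : MinimalBundle pref1 U := by
    have : U ∈ {T : Finset α | MinimalBundle pref2 T} := hMB2
    rw [← heq] at this
    exact this
  -- derive contradiction with hstrict
  have hSU : S ⊆ Uᶜ := by
    intro x hx
    simp only [Finset.mem_compl]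
    intro hxU
    have := hU.1 hxU
    simp [Finset.mem_compl, hx] at this
  have h1 : pref1 Uᶜ S := pref_mono pref1 htotal1 htrans1 hsep1 hdes1 S Uᶜ hSU
  have h2 : pref1 Sᶜ U := pref_mono pref1 htotal1 htrans1 hsep1 hdes1 U Sᶜ hU.1
  have : pref1 Sᶜ S :=
    htrans1 _ _ _ h2 (htrans1 _ _ _ hMB1.1 h1)
  exact hstrict.2 this
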